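/- Let 0<α≤1, n/(n+α)<p<1, q=p(1+α/n), w ∈ A_q, and let a be a w-(p,q,0)-atom supported in the cube Q=Q(x₀,r) centered at x₀ with side length r. Then there is a constant C>0, independent of a, such that for every x ∉ 2√n·Q (in particular for all x with |x−x₀| ≥ √n·r), g_α(a)(x) ≤ C·(|Q|/w(Q)^{1/p})·r^α·|x−x₀|^{−(n+α)}. -/

import Mathlib

open MeasureTheory ENNReal Real SchwartzMap FourierTransform

noncomputable section

abbrev Rn (n : ℕ) := EuclideanSpace ℝ (Fin n)

def cube {n : ℕ} (x₀ : Rn n) (r : ℝ) : Set (Rn n) :=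
  {x | ∀ i, |x i - x₀ i| ≤ r / 2}

def wVol {n : ℕ} (w : Rn n → ℝ) (E : Set (Rn n)) : ℝ≥0∞ :=
  ∫⁻ x in E, ENNReal.ofReal (w x)

def IsAqWith {n : ℕ} (w : Rn n → ℝ) (q : ℝ) (C : ℝ) : Prop :=
  (∀ x, 0 ≤ w x) ∧ (∀ᵐ x, 0 < w x) ∧ LocallyIntegrable w volume ∧
    ∀ (x₀ : Rn n) (r : ℝ), 0 < r →
      ((volume (cube x₀ r))⁻¹ * wVol w (cube x₀ r)) *
        ((volume (cube x₀ r))⁻¹ *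
          ∫⁻ x in cube x₀ r, ENNReal.ofReal (w x ^ (-(1 : ℝ) / (q - 1)))) ^ (q - 1)
        ≤ ENNReal.ofReal C

def IsAq {n : ℕ} (w : Rn n → ℝ) (q : ℝ) : Prop :=
  ∃ C : ℝ, 0 < C ∧ IsAqWith w q C

def IsAinfty {n : ℕ} (w : Rn n → ℝ) : Prop :=
  ∃ q : ℝ, 1 < q ∧ IsAq w q

def lpwNorm {n : ℕ} (w : Rn n → ℝ) (p : ℝ) (g : Rn n → ℝ≥0∞) : ℝ≥0∞ :=
  (∫⁻ x, g x ^ p * ENNReal.ofReal (w x)) ^ (1 / p)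

def lqwNormF {n : ℕ} (w : Rn n → ℝ) (q : ℝ) (a : Rn n → ℝ) : ℝ≥0∞ :=
  (∫⁻ x, ENNReal.ofReal (|a x| ^ q) * ENNReal.ofReal (w x)) ^ (1 / q)

/-- A `w`-`(p,q,0)`-atom supported in the cube `Q(x₀, r)`. -/
def IsWAtom {n : ℕ} (w : Rn n → ℝ) (p q : ℝ) (a : Rn n → ℝ) (x₀ : Rn n) (r : ℝ) : Prop :=
  Measurable a ∧ (∀ x, x ∉ cube x₀ r → a x = 0) ∧
    lqwNormF w q a ≤ (wVol w (cube x₀ r)) ^ (1 / q - 1 / p) ∧ (∫ x, a x) = 0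

/- Schwartz space / tempered distributions -/

lemma hasTemperateGrowth_affine {n : ℕ} (c : Rn n) (L : Rn n →L[ℝ] Rn n) :
    Function.HasTemperateGrowth (fun y : Rn n => c + L y) := by
  apply Function.HasTemperateGrowth.of_fderiv (k := 1) (C := ‖c‖ + ‖L‖)
  · have h : fderiv ℝ (fun y : Rn n => c + L y) = fun _ => L := by
      ext1 y
      have : HasFDerivAt (fun y : Rn n => c + L y) (0 + L) y :=
        (hasFDerivAt_const c y).add (L.hasFDerivAt)
      simpa using this.fderiv
    rw [h]
    exact Function.HasTemperateGrowth.const L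
  · exact (differentiable_const c).add L.differentiable
  · intro x
    calc ‖c + L x‖ ≤ ‖c‖ + ‖L x‖ := norm_add_le _ _
      _ ≤ ‖c‖ + ‖L‖ * ‖x‖ := by gcongr; exact L.le_opNorm x
      _ ≤ (‖c‖ + ‖L‖) * (1 + ‖x‖) ^ 1 := by
          rw [pow_one]
          nlinarith [norm_nonneg c, norm_nonneg (L : Rn n →L[ℝ] Rn n), norm_nonneg x]

/-- For `t ≠ 0`, the Schwartz function `y ↦ t^{-n} φ((x - y)/t) = φ_t(x - y)`;
for `t = 0` the junk value `0`. -/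
def shiftDilate {n : ℕ} (φ : 𝓢(Rn n, ℝ)) (t : ℝ) (x : Rn n) : 𝓢(Rn n, ℝ) := by
  classical
  by_cases h : t = 0
  · exact 0
  · refine (t ^ (-(n : ℤ))) • (SchwartzMap.compCLM (𝕜 := ℝ)
      (g := fun y : Rn n => t⁻¹ • (x - y)) ?_ ?_ φ)
    · have : (fun y : Rn n => t⁻¹ • (x - y))
          = fun y : Rn n => (t⁻¹ • x) + ((-t⁻¹) • (ContinuousLinearMap.id ℝ (Rn n))) y := by
        funext y
        simp [smul_sub, sub_eq_add_neg]
      rw [this]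
      exact hasTemperateGrowth_affine _ _
    · refine ⟨1, ‖x‖ + |t|, fun y => ?_⟩
      have h1 : ‖x - y‖ = |t| * ‖t⁻¹ • (x - y)‖ := by
        rw [norm_smul, norm_inv, Real.norm_eq_abs, ← mul_assoc,
          mul_inv_cancel₀ (by simpa using h), one_mul]
      have h0 : y = x - (x - y) := by abel
      calc ‖y‖ = ‖x - (x - y)‖ := by rw [← h0]
        _ ≤ ‖x‖ + ‖x - y‖ := norm_sub_le _ _
        _ = ‖x‖ + |t| * ‖t⁻¹ • (x - y)‖ := by rw [h1]
        _ ≤ (‖x‖ + |t|) * (1 + ‖t⁻¹ • (x - y)‖) ^ 1 := by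
            have h2 : (0:ℝ) ≤ ‖t⁻¹ • (x - y)‖ := norm_nonneg _
            have h3 : (0:ℝ) ≤ ‖x‖ := norm_nonneg _
            have h4 : (0:ℝ) ≤ |t| := abs_nonneg _
            nlinarith

/-- The convolution `f * φ_t (x)` of a tempered distribution `f` with the dilate `φ_t` of a
Schwartz function `φ`. -/
def distConv {n : ℕ} (f : 𝓢(Rn n, ℝ) →L[ℝ] ℝ) (φ : 𝓢(Rn n, ℝ)) (t : ℝ) (x : Rn n) : ℝ :=
  f (shiftDilate φ t x)

/-- The maximal function `M_φ f (x) = sup_{t > 0} |f * φ_t (x)|` of a tempered distribution. -/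
def maxFun {n : ℕ} (φ : 𝓢(Rn n, ℝ)) (f : 𝓢(Rn n, ℝ) →L[ℝ] ℝ) (x : Rn n) : ℝ≥0∞ :=
  ⨆ (t : ℝ) (_ : 0 < t), ENNReal.ofReal |distConv f φ t x|

/-- The norm of `f` in the weighted Hardy space `H^p_w`, defined through the
maximal function `M_φ f`. -/
def hardyNorm {n : ℕ} (w : Rn n → ℝ) (p : ℝ) (φ : 𝓢(Rn n, ℝ))
    (f : 𝓢(Rn n, ℝ) →L[ℝ] ℝ) : ℝ≥0∞ :=
  lpwNorm w p (maxFun φ f)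

/-- Membership in the weighted Hardy space `H^p_w`. -/
def MemHp {n : ℕ} (w : Rn n → ℝ) (p : ℝ) (φ : 𝓢(Rn n, ℝ))
    (f : 𝓢(Rn n, ℝ) →L[ℝ] ℝ) : Prop :=
  hardyNorm w p φ f < ∞

/-- A tempered distribution vanishes weakly at infinity if `f * φ_t → 0` as `t → ∞`
in the sense of distributions. -/
def VanishesWeaklyAtInfinity {n : ℕ} (f : 𝓢(Rn n, ℝ) →L[ℝ] ℝ) : Prop :=
  ∀ φ η : 𝓢(Rn n, ℝ),
    Filter.Tendsto (fun t : ℝ => ∫ x, distConv f φ t x * η x) Filter.atTop (nhds 0)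

/- Lipschitz space `Lip(α,1,0)` -/

/-- The average `b_Q` of `b` over `Q`. -/
def cubeAvg {n : ℕ} (b : Rn n → ℝ) (Q : Set (Rn n)) : ℝ :=
  (volume Q).toReal⁻¹ * ∫ y in Q, b y

/-- The `Lip(α,1,0)` norm `sup_Q |Q|^{-1-α/n} ∫_Q |b - b_Q|`. -/
def lipNorm (n : ℕ) (α : ℝ) (b : Rn n → ℝ) : ℝ≥0∞ :=
  ⨆ (x₀ : Rn n) (r : ℝ) (_ : 0 < r),
    (volume (cube x₀ r)) ^ (-(1 : ℝ) - α / n) *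
      ∫⁻ y in cube x₀ r, ENNReal.ofReal |b y - cubeAvg b (cube x₀ r)|

/-- `F` realizes the tempered distribution `f` as an element of the dual of `Lip(α,1,0)`:
it is a linear functional, bounded with respect to the `Lip(α,1,0)` norm,
which agrees with `f` on Schwartz functions. -/
def IsLipDualExt {n : ℕ} (α : ℝ) (f : 𝓢(Rn n, ℝ) →L[ℝ] ℝ)
    (F : (Rn n → ℝ) →ₗ[ℝ] ℝ) : Prop :=
  (∀ φ : 𝓢(Rn n, ℝ), F (φ : Rn n → ℝ) = f φ) ∧
    ∃ C : ℝ, 0 ≤ C ∧ ∀ b : Rn n → ℝ,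
      ENNReal.ofReal |F b| ≤ ENNReal.ofReal C * lipNorm n α b

/- Intrinsic square functions -/

/-- The family `𝒞_α`. -/
def Calpha (n : ℕ) (α : ℝ) : Set (Rn n → ℝ) :=
  {φ | Function.support φ ⊆ Metric.closedBall 0 1 ∧ (∫ x, φ x) = 0 ∧
    ∀ x x', |φ x - φ x'| ≤ ‖x - x'‖ ^ α}

/-- The family `𝒞_{(α,ε)}`. -/
def CalphaEps (n : ℕ) (α ε : ℝ) : Set (Rn n → ℝ) :=
  {φ | (∀ x, |φ x| ≤ (1 + ‖x‖) ^ (-(n : ℝ) - ε)) ∧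
    (∀ x x', |φ x - φ x'| ≤
      ‖x - x'‖ ^ α * ((1 + ‖x‖) ^ (-(n : ℝ) - ε) + (1 + ‖x'‖) ^ (-(n : ℝ) - ε))) ∧
    (∫ x, φ x) = 0}

/-- The kernel `z ↦ φ_t(y - z) = t^{-n} φ((y-z)/t)`. -/
def dilKer {n : ℕ} (φ : Rn n → ℝ) (t : ℝ) (y : Rn n) : Rn n → ℝ :=
  fun z => t ^ (-(n : ℤ)) * φ (t⁻¹ • (y - z))

/-- `A_α(f)(y,t)` for the functional `F` representing `f` on `Lip(α,1,0)`. -/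
def intrA {n : ℕ} (α : ℝ) (F : (Rn n → ℝ) →ₗ[ℝ] ℝ) (y : Rn n) (t : ℝ) : ℝ≥0∞ :=
  ⨆ φ ∈ Calpha n α, ENNReal.ofReal |F (dilKer φ t y)|

/-- `Ã_{(α,ε)}(f)(y,t)` for the functional `F` representing `f`. -/
def intrAEps {n : ℕ} (α ε : ℝ) (F : (Rn n → ℝ) →ₗ[ℝ] ℝ) (y : Rn n) (t : ℝ) : ℝ≥0∞ :=
  ⨆ φ ∈ CalphaEps n α ε, ENNReal.ofReal |F (dilKer φ t y)|

/-- `A_α(f)(y,t)` for a (locally integrable) function `f`. -/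
def intrAf {n : ℕ} (α : ℝ) (f : Rn n → ℝ) (y : Rn n) (t : ℝ) : ℝ≥0∞ :=
  ⨆ φ ∈ Calpha n α, ENNReal.ofReal |∫ z, f z * dilKer φ t y z|

/-- `Ã_{(α,ε)}(f)(y,t)` for a function `f`. -/
def intrAfEps {n : ℕ} (α ε : ℝ) (f : Rn n → ℝ) (y : Rn n) (t : ℝ) : ℝ≥0∞ :=
  ⨆ φ ∈ CalphaEps n α ε, ENNReal.ofReal |∫ z, f z * dilKer φ t y z|

/-- The `g`-type square function built from a generalized square-function kernel `A(y,t)`: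
`x ↦ (∫_0^∞ A(x,t)² dt/t)^{1/2}`. -/
def gSF {n : ℕ} (A : Rn n → ℝ → ℝ≥0∞) (x : Rn n) : ℝ≥0∞ :=
  (∫⁻ t in Set.Ioi (0 : ℝ), (A x t) ^ 2 * (ENNReal.ofReal t)⁻¹) ^ (1 / (2 : ℝ))

/-- The area-integral type square function of aperture `β`:
`x ↦ (∬_{|x-y| < βt} A(y,t)² dy dt/t^{n+1})^{1/2}`. -/
def sSF (n : ℕ) (β : ℝ) (A : Rn n → ℝ → ℝ≥0∞) (x : Rn n) : ℝ≥0∞ :=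
  (∫⁻ t in Set.Ioi (0 : ℝ),
      (∫⁻ y in Metric.ball x (β * t), (A y t) ^ 2) * (ENNReal.ofReal (t ^ (n + 1)))⁻¹) ^
    (1 / (2 : ℝ))

/-- The `g^*_λ`-type square function:
`x ↦ (∬_{ℝ^{n+1}_+} (t/(t+|x-y|))^{λn} A(y,t)² dy dt/t^{n+1})^{1/2}`. -/
def gStarSF (n : ℕ) (lam : ℝ) (A : Rn n → ℝ → ℝ≥0∞) (x : Rn n) : ℝ≥0∞ :=
  (∫⁻ t in Set.Ioi (0 : ℝ),
      (∫⁻ y, ENNReal.ofReal ((t / (t + ‖x - y‖)) ^ (lam * n)) * (A y t) ^ 2) *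
        (ENNReal.ofReal (t ^ (n + 1)))⁻¹) ^ (1 / (2 : ℝ))

/-- The weighted maximal function `M_w`. -/
def wMaximal {n : ℕ} (w : Rn n → ℝ) (f : Rn n → ℝ) (x : Rn n) : ℝ≥0∞ :=
  ⨆ (x₀ : Rn n) (r : ℝ) (_ : 0 < r) (_ : x ∈ cube x₀ r),
    (wVol w (cube x₀ r))⁻¹ * ∫⁻ y in cube x₀ r, ENNReal.ofReal |f y| * ENNReal.ofReal (w y)

/-!
Since `∫ a = 0`, `a * φ_t (x) = ∫ a(z) (φ_t(x - z) - φ_t(x - x₀)) dz`, and the `α`-Hölder bound on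
`φ ∈ 𝒞_α` gives `|a * φ_t (x)| ≤ (√n r/2)^α ‖a‖₁ t^{-(n+α)}`; as `supp φ_t ⊆ B(0, t)`, this
vanishes for `t < |x - x₀|/2`. Integrating `t^{-2(n+α)-1}` over `t ≥ |x - x₀|/2` bounds
`g_α(a)(x)` by a multiple of `r^α ‖a‖₁ |x - x₀|^{-(n+α)}`. Finally, Hölder's inequality and the
`A_q` condition give `‖a‖₁ ≤ C^{1/q} |Q| w(Q)^{-1/q} ‖a‖_{L^q_w} ≤ C^{1/q} |Q| w(Q)^{-1/p}`.
-/

section Cube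

variable {n : ℕ}

lemma norm_le_sqrt_mul_of_forall_abs_le (x : Rn n) {c : ℝ} (hc : 0 ≤ c)
    (h : ∀ i, |x i| ≤ c) : ‖x‖ ≤ Real.sqrt n * c := by
  rw [EuclideanSpace.norm_eq, ← Real.sqrt_sq hc, ← Real.sqrt_mul (Nat.cast_nonneg n)]
  refine Real.sqrt_le_sqrt ?_
  calc ∑ i, ‖x i‖ ^ 2 ≤ ∑ _i : Fin n, c ^ 2 :=
        Finset.sum_le_sum fun i _ => pow_le_pow_left₀ (abs_nonneg _) (h i) 2
    _ = n * c ^ 2 := by simp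

lemma isClosed_cube (x₀ : Rn n) (r : ℝ) : IsClosed (cube x₀ r) := by
  simp only [cube, Set.ofPred_forall]
  exact isClosed_iInter fun i => isClosed_le (by fun_prop) continuous_const

lemma closedBall_subset_cube (x₀ : Rn n) (r : ℝ) :
    Metric.closedBall x₀ (r / 2) ⊆ cube x₀ r := fun x hx i =>
  (PiLp.norm_apply_le (x - x₀) i).trans (mem_closedBall_iff_norm.mp hx)

lemma cube_subset_closedBall (x₀ : Rn n) {r : ℝ} (hr : 0 ≤ r) :
    cube x₀ r ⊆ Metric.closedBall x₀ (Real.sqrt n * (r / 2)) := fun x hx =>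
  mem_closedBall_iff_norm.mpr <| norm_le_sqrt_mul_of_forall_abs_le _ (by positivity) hx

lemma isCompact_cube (x₀ : Rn n) {r : ℝ} (hr : 0 ≤ r) : IsCompact (cube x₀ r) :=
  (isCompact_closedBall _ _).of_isClosed_subset (isClosed_cube x₀ r) (cube_subset_closedBall x₀ hr)

lemma volume_cube_pos (x₀ : Rn n) {r : ℝ} (hr : 0 < r) : 0 < volume (cube x₀ r) :=
  (Metric.measure_closedBall_pos volume x₀ (half_pos hr)).trans_le
    (measure_mono (closedBall_subset_cube x₀ r))

lemma volume_cube_lt_top (x₀ : Rn n) {r : ℝ} (hr : 0 ≤ r) : volume (cube x₀ r) < ⊤ :=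
  (isCompact_cube x₀ hr).measure_lt_top

lemma lt_norm_sub_of_notMem_cube {x x₀ : Rn n} {s : ℝ} (hx : x ∉ cube x₀ s) :
    s / 2 < ‖x - x₀‖ := by
  simp only [cube, Set.mem_ofPred_eq, not_forall, not_le] at hx
  obtain ⟨i, hi⟩ := hx
  exact hi.trans_le (PiLp.norm_apply_le (x - x₀) i)

end Cube

section Weight

variable {n : ℕ} {w : Rn n → ℝ}

lemma wVol_lt_top (hw : LocallyIntegrable w volume) {K : Set (Rn n)} (hK : IsCompact K) :
    wVol w K < ⊤ :=
  (hw.integrableOn_isCompact hK).setLIntegral_lt_top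

lemma wVol_pos (hw_meas : AEMeasurable w) (hw : ∀ᵐ x, 0 < w x) {E : Set (Rn n)}
    (hE : volume E ≠ 0) : 0 < wVol w E := by
  rw [wVol, pos_iff_ne_zero, Ne, lintegral_eq_zero_iff' hw_meas.ennreal_ofReal.restrict]
  intro h
  refine hE (Measure.restrict_eq_zero.mp (ae_eq_bot.mp (Filter.eventually_false_iff_eq_bot.mp ?_)))
  filter_upwards [h, ae_restrict_of_ae hw] with x hx0 hx
  simp only [Pi.zero_apply, ENNReal.ofReal_eq_zero] at hx0
  linarith

end Weight

section Muckenhoupt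

variable {n : ℕ} {w : Rn n → ℝ} {q C : ℝ}

lemma IsAqWith.wVol_cube_ne_zero (hw : IsAqWith w q C) (x₀ : Rn n) {r : ℝ} (hr : 0 < r) :
    wVol w (cube x₀ r) ≠ 0 :=
  (wVol_pos hw.2.2.1.aestronglyMeasurable.aemeasurable hw.2.1 (volume_cube_pos x₀ hr).ne').ne'

lemma IsAqWith.wVol_cube_ne_top (hw : IsAqWith w q C) (x₀ : Rn n) {r : ℝ} (hr : 0 < r) :
    wVol w (cube x₀ r) ≠ ⊤ :=
  (wVol_lt_top hw.2.2.1 (isCompact_cube x₀ hr.le)).ne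

lemma IsAqWith.rpow_setLIntegral_dualWeight_le (hq : 1 < q) (hw : IsAqWith w q C) (x₀ : Rn n)
    {r : ℝ} (hr : 0 < r) :
    (∫⁻ x in cube x₀ r, ENNReal.ofReal (w x ^ (-(1 : ℝ) / (q - 1)))) ^ ((q - 1) / q) ≤
      ENNReal.ofReal C ^ (1 / q) * volume (cube x₀ r) * wVol w (cube x₀ r) ^ (-(1 / q)) := by
  set V := volume (cube x₀ r)
  set U := wVol w (cube x₀ r)
  set I := ∫⁻ x in cube x₀ r, ENNReal.ofReal (w x ^ (-(1 : ℝ) / (q - 1)))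
  have hq0 : 0 < q := zero_lt_one.trans hq
  have hV0 : V ≠ 0 := (volume_cube_pos x₀ hr).ne'
  have hVtop : V ≠ ⊤ := (volume_cube_lt_top x₀ hr.le).ne
  have hU0 : U ≠ 0 := hw.wVol_cube_ne_zero x₀ hr
  have hUtop : U ≠ ⊤ := hw.wVol_cube_ne_top x₀ hr
  have hA : (V⁻¹ * I) ^ (q - 1) ≤ V * U⁻¹ * ENNReal.ofReal C := by
    have h : V⁻¹ * U * (V⁻¹ * I) ^ (q - 1) ≤ ENNReal.ofReal C := hw.2.2.2 x₀ r hr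
    rwa [ENNReal.mul_le_iff_le_inv (by simp [hVtop, hU0])
        (ENNReal.mul_ne_top (ENNReal.inv_ne_top.mpr hV0) hUtop),
      ENNReal.mul_inv (by simp [hVtop]) (by simp [hV0]), inv_inv] at h
  calc I ^ ((q - 1) / q) = V ^ ((q - 1) / q) * ((V⁻¹ * I) ^ (q - 1)) ^ (1 / q) := by
        rw [← ENNReal.rpow_mul, mul_one_div,
          ← ENNReal.mul_rpow_of_nonneg _ _ (div_nonneg (by linarith) hq0.le), ← mul_assoc,
          ENNReal.mul_inv_cancel hV0 hVtop, one_mul]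
    _ ≤ V ^ ((q - 1) / q) * (V * U⁻¹ * ENNReal.ofReal C) ^ (1 / q) := by gcongr
    _ = ENNReal.ofReal C ^ (1 / q) * (V ^ ((q - 1) / q) * V ^ (1 / q)) * U ^ (-(1 / q)) := by
        rw [ENNReal.mul_rpow_of_nonneg _ _ (by positivity),
          ENNReal.mul_rpow_of_nonneg _ _ (by positivity), ENNReal.inv_rpow, ← ENNReal.rpow_neg]
        ring
    _ = ENNReal.ofReal C ^ (1 / q) * V * U ^ (-(1 / q)) := by
        rw [← ENNReal.rpow_add _ _ hV0 hVtop, ← add_div, sub_add_cancel, div_self hq0.ne',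
          ENNReal.rpow_one]

lemma IsAqWith.setLIntegral_cube_le (hq : 1 < q) (hw : IsAqWith w q C) (x₀ : Rn n) {r : ℝ}
    (hr : 0 < r) {f : Rn n → ℝ≥0∞} (hf : AEMeasurable f (volume.restrict (cube x₀ r))) :
    ∫⁻ x in cube x₀ r, f x ≤
      ENNReal.ofReal C ^ (1 / q) * volume (cube x₀ r) * wVol w (cube x₀ r) ^ (-(1 / q)) *
        (∫⁻ x in cube x₀ r, f x ^ q * ENNReal.ofReal (w x)) ^ (1 / q) := by
  set W : Rn n → ℝ≥0∞ := fun x => ENNReal.ofReal (w x)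
  have hq0 : 0 < q := zero_lt_one.trans hq
  have hW : AEMeasurable W (volume.restrict (cube x₀ r)) :=
    hw.2.2.1.aestronglyMeasurable.aemeasurable.ennreal_ofReal.restrict
  have hW_pos : ∀ᵐ x ∂volume.restrict (cube x₀ r), 0 < w x := ae_restrict_of_ae hw.2.1
  have hsplit : ∀ᵐ x ∂volume.restrict (cube x₀ r),
      f x = (fun x => f x * W x ^ (1 / q)) x * (fun x => W x ^ (-(1 / q))) x := by
    filter_upwards [hW_pos] with x hx
    rw [mul_assoc, ← ENNReal.rpow_add _ _ (by simpa [W] using hx) ENNReal.ofReal_ne_top,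
      add_neg_cancel, ENNReal.rpow_zero, mul_one]
  have hfW : ∀ x, (f x * W x ^ (1 / q)) ^ q = f x ^ q * W x := fun x => by
    rw [ENNReal.mul_rpow_of_nonneg _ _ hq0.le, ← ENNReal.rpow_mul, one_div_mul_cancel hq0.ne',
      ENNReal.rpow_one]
  have hWdual : ∀ᵐ x ∂volume.restrict (cube x₀ r),
      (W x ^ (-(1 / q))) ^ (q / (q - 1)) = ENNReal.ofReal (w x ^ (-(1 : ℝ) / (q - 1))) := by
    filter_upwards [hW_pos] with x hx
    rw [← ENNReal.rpow_mul, ENNReal.ofReal_rpow_of_pos hx]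
    congr 2
    field_simp
  calc ∫⁻ x in cube x₀ r, f x
      = ∫⁻ x in cube x₀ r, ((fun x => f x * W x ^ (1 / q)) * fun x => W x ^ (-(1 / q))) x :=
        lintegral_congr_ae hsplit
    _ ≤ (∫⁻ x in cube x₀ r, (f x * W x ^ (1 / q)) ^ q) ^ (1 / q) *
          (∫⁻ x in cube x₀ r, (W x ^ (-(1 / q))) ^ (q / (q - 1))) ^ (1 / (q / (q - 1))) :=
        ENNReal.lintegral_mul_le_Lp_mul_Lq _ (Real.HolderConjugate.conjExponent hq)
          (hf.mul (hW.pow_const _)) (hW.pow_const _)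
    _ = (∫⁻ x in cube x₀ r, f x ^ q * W x) ^ (1 / q) *
          (∫⁻ x in cube x₀ r, ENNReal.ofReal (w x ^ (-(1 : ℝ) / (q - 1)))) ^ ((q - 1) / q) := by
        rw [lintegral_congr hfW, lintegral_congr_ae hWdual, one_div_div]
    _ ≤ _ := by
        rw [mul_comm]
        gcongr
        exact hw.rpow_setLIntegral_dualWeight_le hq x₀ hr

end Muckenhoupt

section Atom

variable {n : ℕ} {w : Rn n → ℝ} {p q C : ℝ} {a : Rn n → ℝ} {x₀ : Rn n} {r : ℝ}

lemma IsWAtom.support_subset (ha : IsWAtom w p q a x₀ r) : Function.support a ⊆ cube x₀ r :=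
  fun x hx => by_contra fun h => hx (ha.2.1 x h)

lemma IsWAtom.lintegral_abs_le (hq : 1 < q) (hw : IsAqWith w q C) (hr : 0 < r)
    (ha : IsWAtom w p q a x₀ r) :
    ∫⁻ x, ENNReal.ofReal |a x| ≤
      ENNReal.ofReal C ^ (1 / q) * volume (cube x₀ r) * wVol w (cube x₀ r) ^ (-(1 / p)) := by
  set U := wVol w (cube x₀ r)
  have hq0 : 0 < q := zero_lt_one.trans hq
  have hnorm : (∫⁻ x in cube x₀ r, ENNReal.ofReal |a x| ^ q * ENNReal.ofReal (w x)) ^ (1 / q) ≤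
      U ^ (1 / q - 1 / p) := by
    refine le_trans ?_ ha.2.2.1
    simp_rw [lqwNormF, ENNReal.ofReal_rpow_of_nonneg (abs_nonneg _) hq0.le]
    gcongr
    exact Measure.restrict_le_self
  have hsupp : (fun x => ENNReal.ofReal |a x|).support ⊆ cube x₀ r := fun x hx =>
    ha.support_subset fun h => hx (by simp [h])
  calc ∫⁻ x, ENNReal.ofReal |a x| = ∫⁻ x in cube x₀ r, ENNReal.ofReal |a x| :=
        (setLIntegral_eq_of_support_subset hsupp).symm
    _ ≤ ENNReal.ofReal C ^ (1 / q) * volume (cube x₀ r) * U ^ (-(1 / q)) *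
          (∫⁻ x in cube x₀ r, ENNReal.ofReal |a x| ^ q * ENNReal.ofReal (w x)) ^ (1 / q) :=
        hw.setLIntegral_cube_le hq x₀ hr ha.1.abs.ennreal_ofReal.aemeasurable
    _ ≤ ENNReal.ofReal C ^ (1 / q) * volume (cube x₀ r) *
          (U ^ (-(1 / q)) * U ^ (1 / q - 1 / p)) := by
        rw [← mul_assoc]
        gcongr
    _ = _ := by
        rw [← ENNReal.rpow_add _ _ (hw.wVol_cube_ne_zero x₀ hr) (hw.wVol_cube_ne_top x₀ hr)]
        congr 2
        ring

lemma IsAqWith.ofReal_rpow_mul_volume_cube_mul_wVol_rpow_lt_top (hw : IsAqWith w q C)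
    (x₀ : Rn n) (hr : 0 < r) {s : ℝ} (hs : 0 ≤ s) (t : ℝ) :
    ENNReal.ofReal C ^ s * volume (cube x₀ r) * wVol w (cube x₀ r) ^ t < ⊤ :=
  ENNReal.mul_lt_top
    (ENNReal.mul_lt_top (ENNReal.rpow_lt_top_of_nonneg hs ENNReal.ofReal_ne_top)
      (volume_cube_lt_top x₀ hr.le))
    (ENNReal.rpow_ne_top_of_ne_zero (hw.wVol_cube_ne_zero x₀ hr)
      (hw.wVol_cube_ne_top x₀ hr)).lt_top

lemma IsWAtom.integrable (hq : 1 < q) (hw : IsAqWith w q C) (hr : 0 < r)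
    (ha : IsWAtom w p q a x₀ r) : Integrable a :=
  ⟨ha.1.aestronglyMeasurable, by
    simpa only [HasFiniteIntegral, Real.enorm_eq_ofReal_abs] using
      (ha.lintegral_abs_le hq hw hr).trans_lt
        (hw.ofReal_rpow_mul_volume_cube_mul_wVol_rpow_lt_top x₀ hr (by positivity) _)⟩

lemma IsWAtom.integral_abs_le (hq : 1 < q) (hw : IsAqWith w q C) (hC : 0 ≤ C) (hr : 0 < r)
    (ha : IsWAtom w p q a x₀ r) :
    ∫ x, |a x| ≤
      C ^ (1 / q) * (volume (cube x₀ r)).toReal * (wVol w (cube x₀ r)).toReal ^ (-(1 / p)) := by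
  have hlin : ENNReal.ofReal (∫ x, |a x|) = ∫⁻ x, ENNReal.ofReal |a x| :=
    ofReal_integral_eq_lintegral_ofReal (ha.integrable hq hw hr).abs
      (ae_of_all _ fun x => abs_nonneg _)
  rw [← ENNReal.toReal_ofReal (integral_nonneg fun x => abs_nonneg (a x)), hlin]
  refine (ENNReal.toReal_mono ?_ (ha.lintegral_abs_le hq hw hr)).trans_eq ?_
  · exact (hw.ofReal_rpow_mul_volume_cube_mul_wVol_rpow_lt_top x₀ hr (by positivity) _).ne
  rw [ENNReal.toReal_mul, ENNReal.toReal_mul, ← ENNReal.toReal_rpow, ← ENNReal.toReal_rpow,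
    ENNReal.toReal_ofReal hC]

end Atom

lemma continuous_of_abs_sub_le_norm_sub_rpow {E : Type*} [SeminormedAddCommGroup E] {f : E → ℝ}
    {α : ℝ} (hα : 0 < α) (hf : ∀ x x', |f x - f x'| ≤ ‖x - x'‖ ^ α) : Continuous f := by
  refine Metric.continuous_iff.mpr fun x₀ ε hε => ⟨ε ^ (1 / α), by positivity, fun x hx => ?_⟩
  calc dist (f x) (f x₀) ≤ dist x x₀ ^ α := by
        rw [Real.dist_eq, dist_eq_norm]
        exact hf x x₀
    _ < (ε ^ (1 / α)) ^ α := Real.rpow_lt_rpow dist_nonneg hx hα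
    _ = ε := by rw [← Real.rpow_mul hε.le, one_div_mul_cancel hα.ne', Real.rpow_one]

section Kernel

variable {n : ℕ} {α t : ℝ} {φ : Rn n → ℝ}

lemma Calpha.eq_zero_of_one_lt_norm (hφ : φ ∈ Calpha n α) {u : Rn n} (hu : 1 < ‖u‖) :
    φ u = 0 :=
  Function.notMem_support.mp fun h => (mem_closedBall_zero_iff.mp (hφ.1 h)).not_gt hu

lemma Calpha.continuous (hα : 0 < α) (hφ : φ ∈ Calpha n α) : Continuous φ :=
  continuous_of_abs_sub_le_norm_sub_rpow hα hφ.2.2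

lemma Calpha.exists_bound (hα : 0 < α) (hφ : φ ∈ Calpha n α) : ∃ B, ∀ u, ‖φ u‖ ≤ B :=
  (Calpha.continuous hα hφ).bounded_above_of_compact_support <|
    HasCompactSupport.intro (isCompact_closedBall 0 1) fun _ hu =>
      Function.notMem_support.mp fun h => hu (hφ.1 h)

lemma Calpha.dilKer_eq_zero (hφ : φ ∈ Calpha n α) (ht : 0 < t) {y z : Rn n}
    (h : t < ‖y - z‖) : dilKer φ t y z = 0 := by
  rw [dilKer, Calpha.eq_zero_of_one_lt_norm hφ, mul_zero]
  rwa [norm_smul, norm_inv, Real.norm_of_nonneg ht.le, one_lt_inv_mul₀ ht]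

lemma Calpha.abs_dilKer_sub_le (hφ : φ ∈ Calpha n α) (ht : 0 < t) (y z z' : Rn n) :
    |dilKer φ t y z - dilKer φ t y z'| ≤ t ^ (-((n : ℝ) + α)) * ‖z - z'‖ ^ α := by
  have hsub : t⁻¹ • (y - z) - t⁻¹ • (y - z') = t⁻¹ • (z' - z) := by
    rw [← smul_sub]
    congr 1
    abel
  calc |dilKer φ t y z - dilKer φ t y z'|
      = t ^ (-(n : ℤ)) * |φ (t⁻¹ • (y - z)) - φ (t⁻¹ • (y - z'))| := by
        rw [dilKer, dilKer, ← mul_sub, abs_mul, abs_of_pos (zpow_pos ht _)]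
    _ ≤ t ^ (-(n : ℤ)) * ‖t⁻¹ • (z' - z)‖ ^ α := by
        rw [← hsub]
        gcongr
        exact hφ.2.2 _ _
    _ = t ^ (-((n : ℝ) + α)) * ‖z - z'‖ ^ α := by
        rw [norm_smul, norm_inv, Real.norm_of_nonneg ht.le, norm_sub_rev,
          Real.mul_rpow (by positivity) (norm_nonneg _), Real.inv_rpow ht.le, Real.rpow_neg ht.le,
          Real.rpow_add ht, Real.rpow_natCast, zpow_neg, zpow_natCast, mul_inv]
        ring

lemma Calpha.continuous_dilKer (hα : 0 < α) (hφ : φ ∈ Calpha n α) (t : ℝ) (y : Rn n) :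
    Continuous (dilKer φ t y) :=
  continuous_const.mul ((Calpha.continuous hα hφ).comp (by fun_prop))

variable {a : Rn n → ℝ} {x₀ : Rn n} {ρ : ℝ}

lemma Calpha.abs_integral_mul_dilKer_le (hα : 0 < α) (hφ : φ ∈ Calpha n α) (ht : 0 < t)
    (ha : Integrable a) (ha0 : ∫ z, a z = 0) (hsupp : Function.support a ⊆ Metric.closedBall x₀ ρ)
    (x : Rn n) :
    |∫ z, a z * dilKer φ t x z| ≤ ρ ^ α * (∫ z, |a z|) * t ^ (-((n : ℝ) + α)) := by
  set k := dilKer φ t x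
  obtain ⟨B, hB⟩ := Calpha.exists_bound hα hφ
  have hk : Integrable fun z => a z * k z :=
    ha.mul_bdd (c := ‖t ^ (-(n : ℤ))‖ * B) (Calpha.continuous_dilKer hα hφ t x).aestronglyMeasurable
      (ae_of_all _ fun z => by
        rw [show k z = t ^ (-(n : ℤ)) * φ (t⁻¹ • (x - z)) from rfl, norm_mul]
        exact mul_le_mul_of_nonneg_left (hB _) (norm_nonneg _))
  have hcancel : ∫ z, a z * k z = ∫ z, a z * (k z - k x₀) := by
    simp_rw [mul_sub]
    rw [integral_sub hk (ha.mul_const _), integral_mul_const, ha0, zero_mul, sub_zero]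
  have hpt : ∀ z, |a z * (k z - k x₀)| ≤ |a z| * (ρ ^ α * t ^ (-((n : ℝ) + α))) := fun z => by
    rw [abs_mul]
    by_cases hz : a z = 0
    · simp [hz]
    gcongr
    calc |k z - k x₀| ≤ t ^ (-((n : ℝ) + α)) * ‖z - x₀‖ ^ α := Calpha.abs_dilKer_sub_le hφ ht x z x₀
      _ ≤ ρ ^ α * t ^ (-((n : ℝ) + α)) := by
        rw [mul_comm]
        gcongr
        exact mem_closedBall_iff_norm.mp (hsupp hz)
  calc |∫ z, a z * k z| = |∫ z, a z * (k z - k x₀)| := by rw [hcancel]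
    _ ≤ ∫ z, |a z * (k z - k x₀)| := abs_integral_le_integral_abs
    _ ≤ ∫ z, |a z| * (ρ ^ α * t ^ (-((n : ℝ) + α))) :=
        integral_mono_of_nonneg (ae_of_all _ fun _ => abs_nonneg _) (ha.abs.mul_const _)
          (ae_of_all _ hpt)
    _ = ρ ^ α * (∫ z, |a z|) * t ^ (-((n : ℝ) + α)) := by rw [integral_mul_const]; ring

lemma Calpha.integral_mul_dilKer_eq_zero (hφ : φ ∈ Calpha n α) (ht : 0 < t)
    (hsupp : Function.support a ⊆ Metric.closedBall x₀ ρ) {x : Rn n} (hx : ρ + t < ‖x - x₀‖) :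
    ∫ z, a z * dilKer φ t x z = 0 := by
  refine integral_eq_zero_of_ae (ae_of_all _ fun z => show a z * dilKer φ t x z = 0 from ?_)
  by_cases hz : a z = 0
  · simp [hz]
  have hzx₀ : ‖z - x₀‖ ≤ ρ := mem_closedBall_iff_norm.mp (hsupp hz)
  have htri := norm_sub_le_norm_sub_add_norm_sub x z x₀
  rw [Calpha.dilKer_eq_zero hφ ht (by linarith), mul_zero]

lemma intrAf_le_of_integral_eq_zero (hα : 0 < α) (ht : 0 < t) (ha : Integrable a)
    (ha0 : ∫ z, a z = 0) (hsupp : Function.support a ⊆ Metric.closedBall x₀ ρ) (x : Rn n) :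
    intrAf α a x t ≤ ENNReal.ofReal (ρ ^ α * (∫ z, |a z|) * t ^ (-((n : ℝ) + α))) :=
  iSup₂_le fun _ hφ =>
    ENNReal.ofReal_le_ofReal (Calpha.abs_integral_mul_dilKer_le hα hφ ht ha ha0 hsupp x)

lemma intrAf_eq_zero_of_add_lt_norm_sub (ht : 0 < t)
    (hsupp : Function.support a ⊆ Metric.closedBall x₀ ρ) {x : Rn n} (hx : ρ + t < ‖x - x₀‖) :
    intrAf α a x t = 0 :=
  le_zero_iff.mp <| iSup₂_le fun _ hφ => by
    rw [Calpha.integral_mul_dilKer_eq_zero hφ ht hsupp hx, abs_zero, ENNReal.ofReal_zero]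

end Kernel

lemma lintegral_Ioi_ofReal_mul_rpow {s c γ : ℝ} (hs : 0 < s) (hc : 0 ≤ c) (hγ : 0 < γ) :
    ∫⁻ t in Set.Ioi s, ENNReal.ofReal (c * t ^ (-γ - 1)) = ENNReal.ofReal (c * s ^ (-γ) / γ) := by
  have hγ1 : -γ - 1 < -1 := by linarith
  rw [← ofReal_integral_eq_lintegral_ofReal ((integrableOn_Ioi_rpow_of_lt hγ1 hs).const_mul c)
    ((ae_restrict_iff' measurableSet_Ioi).mpr (ae_of_all _ fun t ht =>
      mul_nonneg hc (Real.rpow_nonneg (hs.trans ht).le _))),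
    integral_const_mul, integral_Ioi_rpow_of_lt hγ1 hs, sub_add_cancel]
  congr 1
  field_simp

lemma gSF_le_of_eq_zero_of_le_rpow {n : ℕ} {A : Rn n → ℝ → ℝ≥0∞} {x : Rn n} {s K β : ℝ}
    (hs : 0 < s) (hK : 0 ≤ K) (hβ : 0 < β) (hsmall : ∀ t, 0 < t → t < s → A x t = 0)
    (hlarge : ∀ t, s ≤ t → A x t ≤ ENNReal.ofReal (K * t ^ (-β))) :
    gSF A x ≤ ENNReal.ofReal (K * s ^ (-β) / Real.sqrt (2 * β)) := by
  set G : ℝ → ℝ≥0∞ := fun t => ENNReal.ofReal (K ^ 2 * t ^ (-(2 * β) - 1))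
  have htwo : -(2 * β) = -β * (2 : ℕ) := by push_cast; ring
  have hpt : ∀ t ∈ Set.Ioi (0 : ℝ),
      A x t ^ 2 * (ENNReal.ofReal t)⁻¹ ≤ (Set.Ici s).indicator G t := by
    intro t (ht : 0 < t)
    by_cases hts : s ≤ t
    · rw [Set.indicator_of_mem (Set.mem_Ici.mpr hts)]
      calc A x t ^ 2 * (ENNReal.ofReal t)⁻¹
          ≤ ENNReal.ofReal (K * t ^ (-β)) ^ 2 * (ENNReal.ofReal t)⁻¹ := by
            gcongr
            exact hlarge t hts
        _ = ENNReal.ofReal (K ^ 2 * t ^ (-(2 * β) - 1)) := by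
            rw [← ENNReal.ofReal_pow (by positivity), ← ENNReal.ofReal_inv_of_pos ht,
              ← ENNReal.ofReal_mul (by positivity), Real.rpow_sub ht, Real.rpow_one, htwo,
              Real.rpow_mul_natCast ht.le]
            congr 1
            ring
    · rw [hsmall t ht (lt_of_not_ge hts), zero_pow two_ne_zero, zero_mul]
      exact zero_le
  have hint : ∫⁻ t in Set.Ioi 0, A x t ^ 2 * (ENNReal.ofReal t)⁻¹ ≤
      ENNReal.ofReal (K ^ 2 * s ^ (-(2 * β)) / (2 * β)) :=
    calc ∫⁻ t in Set.Ioi 0, A x t ^ 2 * (ENNReal.ofReal t)⁻¹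
        ≤ ∫⁻ t in Set.Ioi 0, (Set.Ici s).indicator G t := setLIntegral_mono' measurableSet_Ioi hpt
      _ ≤ ∫⁻ t, (Set.Ici s).indicator G t := setLIntegral_le_lintegral _ _
      _ = ∫⁻ t in Set.Ioi s, G t := by
        rw [lintegral_indicator measurableSet_Ici, setLIntegral_congr Ioi_ae_eq_Ici]
      _ = _ := lintegral_Ioi_ofReal_mul_rpow hs (sq_nonneg K) (by positivity)
  have hsq : K ^ 2 * s ^ (-(2 * β)) = (K * s ^ (-β)) ^ 2 := by
    rw [htwo, Real.rpow_mul_natCast hs.le, mul_pow]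
  calc gSF A x ≤ ENNReal.ofReal (K ^ 2 * s ^ (-(2 * β)) / (2 * β)) ^ (1 / (2 : ℝ)) :=
        ENNReal.rpow_le_rpow hint (by norm_num)
    _ = ENNReal.ofReal (K * s ^ (-β) / Real.sqrt (2 * β)) := by
        rw [ENNReal.ofReal_rpow_of_nonneg (by positivity) (by norm_num), ← Real.sqrt_eq_rpow,
          Real.sqrt_div' _ (by positivity), hsq, Real.sqrt_sq (by positivity)]

lemma gSF_intrAf_le_of_integral_eq_zero {n : ℕ} {α ρ : ℝ} {a : Rn n → ℝ} {x₀ x : Rn n}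
    (hα : 0 < α) (ha : Integrable a) (ha0 : ∫ z, a z = 0) (hρ : 0 ≤ ρ)
    (hsupp : Function.support a ⊆ Metric.closedBall x₀ ρ) (hx : 2 * ρ < ‖x - x₀‖) :
    gSF (intrAf α a) x ≤ ENNReal.ofReal (2 ^ ((n : ℝ) + α) * ρ ^ α * (∫ z, |a z|) *
      ‖x - x₀‖ ^ (-((n : ℝ) + α)) / Real.sqrt (2 * ((n : ℝ) + α))) := by
  have hR : 0 < ‖x - x₀‖ / 2 := by linarith
  refine (gSF_le_of_eq_zero_of_le_rpow hR (by positivity) (by positivity)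
    (fun t ht hts => intrAf_eq_zero_of_add_lt_norm_sub ht hsupp (by linarith))
    (fun t hts => intrAf_le_of_integral_eq_zero hα (hR.trans_le hts) ha ha0 hsupp x)).trans_eq ?_
  rw [Real.div_rpow (norm_nonneg _) zero_le_two, Real.rpow_neg zero_le_two, div_inv_eq_mul]
  ring_nf

theorem intrinsic_g_function_of_atom_pointwise_bound_general
    {n : ℕ} (hn : 0 < n) (α p q : ℝ) (hα0 : 0 < α)
    (hp0 : (n : ℝ) / ((n : ℝ) + α) < p)
    (hq : q = p * (1 + α / (n : ℝ)))
    (w : Rn n → ℝ) (hw : IsAq w q) :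
    ∃ C : ℝ, 0 < C ∧ ∀ (a : Rn n → ℝ) (x₀ : Rn n) (r : ℝ), 0 < r →
      IsWAtom w p q a x₀ r →
      ∀ x : Rn n, x ∉ cube x₀ (2 * Real.sqrt n * r) →
      gSF (intrAf α a) x ≤ ENNReal.ofReal
        (C * ((volume (cube x₀ r)).toReal / (wVol w (cube x₀ r)).toReal ^ (1 / p)) *
          r ^ α * ‖x - x₀‖ ^ (-((n : ℝ) + α))) := by
  obtain ⟨C₀, hC₀, hAq⟩ := hw
  have hq1 : 1 < q := by
    have hn' : (0 : ℝ) < n := Nat.cast_pos.mpr hn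
    calc 1 = (n : ℝ) / (n + α) * (1 + α / n) := by field_simp
      _ < p * (1 + α / n) := by gcongr
      _ = q := hq.symm
  set β := (n : ℝ) + α
  refine ⟨2 ^ β * (Real.sqrt n / 2) ^ α * C₀ ^ (1 / q) / Real.sqrt (2 * β), by positivity,
    fun a x₀ r hr ha x hx => ?_⟩
  have hx' : 2 * (Real.sqrt n * (r / 2)) < ‖x - x₀‖ := by
    convert lt_norm_sub_of_notMem_cube hx using 1
    ring
  refine (gSF_intrAf_le_of_integral_eq_zero hα0 (ha.integrable hq1 hAq hr) ha.2.2.2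
    (by positivity) (ha.support_subset.trans (cube_subset_closedBall x₀ hr.le)) hx').trans
    (ENNReal.ofReal_le_ofReal ?_)
  calc 2 ^ β * (Real.sqrt n * (r / 2)) ^ α * (∫ z, |a z|) * ‖x - x₀‖ ^ (-β) / Real.sqrt (2 * β)
      ≤ 2 ^ β * (Real.sqrt n * (r / 2)) ^ α * (C₀ ^ (1 / q) * (volume (cube x₀ r)).toReal *
          (wVol w (cube x₀ r)).toReal ^ (-(1 / p))) * ‖x - x₀‖ ^ (-β) / Real.sqrt (2 * β) := by
        gcongr
        exact ha.integral_abs_le hq1 hAq hC₀.le hr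
    _ = _ := by
        rw [show Real.sqrt n * (r / 2) = Real.sqrt n / 2 * r by ring,
          Real.mul_rpow (by positivity) hr.le, Real.rpow_neg ENNReal.toReal_nonneg]
        ring

/-- Let `0 < α ≤ 1`, `n/(n+α) < p < 1`, `q = p(1+α/n)`, `w ∈ A_q`, and let `a` be a
`w`-`(p,q,0)`-atom supported in the cube `Q = Q(x₀,r)`. Then there is a constant `C > 0`
independent of `a` such that for every `x ∉ 2√n·Q`,
`g_α(a)(x) ≤ C · (|Q|/w(Q)^{1/p}) · r^α · |x-x₀|^{-(n+α)}`. -/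
theorem intrinsic_g_function_of_atom_pointwise_bound
    {n : ℕ} (hn : 0 < n) (α p q : ℝ) (hα0 : 0 < α) (hα1 : α ≤ 1)
    (hp0 : (n : ℝ) / ((n : ℝ) + α) < p) (hp1 : p < 1)
    (hq : q = p * (1 + α / (n : ℝ)))
    (w : Rn n → ℝ) (hw : IsAq w q) :
    ∃ C : ℝ, 0 < C ∧ ∀ (a : Rn n → ℝ) (x₀ : Rn n) (r : ℝ), 0 < r →
      IsWAtom w p q a x₀ r →
      ∀ x : Rn n, x ∉ cube x₀ (2 * Real.sqrt n * r) →
      gSF (intrAf α a) x ≤ ENNReal.ofReal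
        (C * ((volume (cube x₀ r)).toReal / (wVol w (cube x₀ r)).toReal ^ (1 / p)) *
          r ^ α * ‖x - x₀‖ ^ (-((n : ℝ) + α))) :=
  intrinsic_g_function_of_atom_pointwise_bound_general hn α p q hα0 hp0 hq w hw

end
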